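/- arXiv:1703.04992 — 3 statements merged into one kernel-verified Lean document; each statement's English description precedes it below -/
import Mathlib

section
/- Let (Q, q) be a finite-dimensional quadratic space over F_2 (q : Q → F_2 with q(x+y)-q(x)-q(y) a bilinear form) whose bilinear form is non-degenerate, and suppose Q admits a maximal isotropic subspace of dimension (dim Q)/2. If U, U', U'' are three maximal isotropic subspaces of Q, then dim(U ∩ U') + dim(U' ∩ U'') + dim(U'' ∩ U) ≡ dim U (mod 2). -/
/-!
Let `b` be the polar form of `q`. On the space of triples `(x, y, z) ∈ L₁ × L₂ × L₃` with
`x + y + z = 0`, Kashiwara's form `((x, y, z), (x', y', z')) ↦ b x y'` is alternating, since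
`b x y = q (x + y) - q x - q y = q (-z) = 0`. Using `Lᵢᗮ = Lᵢ`, its kernel consists of the
triples with `x ∈ L₁ ⊓ L₂ ⊔ L₁ ⊓ L₃`, so its rank is
`dim (L₁ ⊓ (L₂ ⊔ L₃)) - dim (L₁ ⊓ L₂ ⊔ L₁ ⊓ L₃)`. Computing both dimensions from `Lᵢᗮ = Lᵢ`
shows that this rank is congruent to `dim L₁ + ∑ dim (Lᵢ ⊓ Lⱼ)` mod 2, and the rank of an
alternating form is even.
-/

open Module

theorem LinearMap.finrank_comap_of_le_range {K V W : Type*} [Field K] [AddCommGroup V]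
    [Module K V] [FiniteDimensional K V] [AddCommGroup W] [Module K W]
    (f : V →ₗ[K] W) {S : Submodule K W} (hS : S ≤ LinearMap.range f) :
    finrank K (S.comap f) = finrank K (LinearMap.ker f) + finrank K S := by
  set g := f.restrict (p := S.comap f) (q := S) fun _ hx => hx
  have hg : LinearMap.range g = ⊤ := by
    refine LinearMap.range_eq_top.mpr fun ⟨s, hs⟩ => ?_
    obtain ⟨v, rfl⟩ := hS hs
    exact ⟨⟨v, hs⟩, rfl⟩
  have hker : LinearMap.ker g = (LinearMap.ker f).comap (S.comap f).subtype := by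
    ext; simp [g, Subtype.ext_iff]
  have := LinearMap.finrank_range_add_finrank_ker g
  rw [hg, finrank_top, hker, (Submodule.comapSubtypeEquivOfLe _).finrank_eq] at this
  · omega
  · exact LinearMap.ker_le_comap f

namespace LinearMap.BilinForm

theorem orthogonal_sup {R M : Type*} [CommRing R] [AddCommGroup M] [Module R M]
    (B : LinearMap.BilinForm R M) (N L : Submodule R M) :
    B.orthogonal (N ⊔ L) = B.orthogonal N ⊓ B.orthogonal L := by
  refine le_antisymm (le_inf (orthogonal_le le_sup_left) (orthogonal_le le_sup_right)) ?_
  rintro x ⟨hN, hL⟩ y hy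
  obtain ⟨n, hn, l, hl, rfl⟩ := Submodule.mem_sup.mp hy
  simp [hN n hn, hL l hl]

variable {K V : Type*} [Field K] [AddCommGroup V] [Module K V] [FiniteDimensional K V]

theorem orthogonal_inf {B : LinearMap.BilinForm K V} (hB : B.Nondegenerate) (hB₀ : B.IsRefl)
    (N L : Submodule K V) : B.orthogonal (N ⊓ L) = B.orthogonal N ⊔ B.orthogonal L := by
  rw [← orthogonal_orthogonal hB hB₀ (_ ⊔ _), orthogonal_sup, orthogonal_orthogonal hB hB₀,
    orthogonal_orthogonal hB hB₀]

/-- Split off a hyperbolic plane `span {e, f}` with `B e f ≠ 0` and induct on its complement. -/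
theorem IsAlt.even_finrank_range {B : LinearMap.BilinForm K V} (hB : B.IsAlt) :
    Even (finrank K (LinearMap.range B)) := by
  induction hn : finrank K V using Nat.strong_induction_on generalizing V with
  | _ n ih =>
  obtain rfl | hB0 := eq_or_ne B 0
  · rw [LinearMap.range_zero, finrank_bot]; exact Even.zero
  obtain ⟨e, f, hef⟩ : ∃ e f, B e f ≠ 0 := by
    by_contra! h; exact hB0 (LinearMap.ext₂ h)
  have hfe : B f e ≠ 0 := by rwa [← hB.neg_eq, neg_ne_zero]
  set W := Submodule.span K (Set.range ![e, f])
  have he : e ∈ W := Submodule.subset_span ⟨0, rfl⟩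
  have hf : f ∈ W := Submodule.subset_span ⟨1, rfl⟩
  have hW : finrank K W = 2 := by
    refine (finrank_span_eq_card ?_).trans (Fintype.card_fin 2)
    refine LinearIndependent.pair_iff.mpr fun s t hst => ⟨?_, ?_⟩
    · simpa [hB.self_eq_zero, hfe] using congrArg (B f) hst
    · simpa [hB.self_eq_zero, hef] using congrArg (B e) hst
  have hcompl : IsCompl W (B.orthogonal W) := by
    refine (isCompl_orthogonal_iff_disjoint hB.isRefl).mpr ?_
    rw [Submodule.disjoint_def]
    intro x hxW hx
    obtain ⟨c, rfl⟩ := (Submodule.mem_span_range_iff_exists_fun K).mp hxW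
    have h0 := hx e he
    have h1 := hx f hf
    simp only [Fin.sum_univ_two, Matrix.cons_val_zero, Matrix.cons_val_one, map_add, map_smul,
      hB.self_eq_zero, smul_eq_mul, mul_zero, zero_add, add_zero, mul_eq_zero, hef, hfe,
      or_false] at h0 h1
    simp [Fin.sum_univ_two, h0, h1]
  have hker : finrank K (LinearMap.ker (B.restrict (B.orthogonal W))) =
      finrank K (LinearMap.ker B) := by
    rw [ker_restrict_eq_of_codisjoint hcompl.symm.codisjoint
      (fun x hx y hy => hB.isRefl _ _ (hx y hy))]
    refine (Submodule.comapSubtypeEquivOfLe ?_).finrank_eq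
    intro x hx y _
    exact hB.isRefl _ _ (by rw [LinearMap.mem_ker.mp hx]; rfl)
  have hdim := Submodule.finrank_add_eq_of_isCompl hcompl
  have hrest := ih _ (by omega) (B := B.restrict (B.orthogonal W)) (fun x => hB x) rfl
  have hB_rank := LinearMap.finrank_range_add_finrank_ker B
  have hrest_rank := LinearMap.finrank_range_add_finrank_ker (B.restrict (B.orthogonal W))
  rw [Nat.even_iff] at hrest ⊢
  omega

end LinearMap.BilinForm

namespace QuadraticMap

theorem polarBilin_isRefl {R M N : Type*} [CommRing R] [AddCommGroup M] [Module R M]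
    [AddCommGroup N] [Module R N] (Q : QuadraticMap R M N) : Q.polarBilin.IsRefl :=
  fun x y h => by rwa [polarBilin_apply_apply, polar_comm, ← polarBilin_apply_apply]

theorem map_zero_of_polar_add_left {M N : Type*} [AddCommGroup M] [AddCommGroup N] {q : M → N}
    (hq : ∀ x x' y, polar q (x + x') y = polar q x y + polar q x' y) : q 0 = 0 := by
  simpa [polar] using hq 0 0 0

def ofZModTwo {M : Type*} [AddCommGroup M] [Module (ZMod 2) M] (q : M → ZMod 2)
    (hq : ∀ x x' y, polar q (x + x') y = polar q x y + polar q x' y) :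
    QuadraticForm (ZMod 2) M :=
  have cases (a : ZMod 2) : a = 0 ∨ a = 1 := by revert a; decide
  ofPolar q
    (fun a x => by obtain rfl | rfl := cases a <;> simp [map_zero_of_polar_add_left hq])
    hq
    (fun a x y => by obtain rfl | rfl := cases a <;> simp [polar, map_zero_of_polar_add_left hq])

variable {K V : Type*} [Field K] [AddCommGroup V] [Module K V]

def IsLagrangian (Q : QuadraticForm K V) (L : Submodule K V) : Prop :=
  (∀ x ∈ L, Q x = 0) ∧ 2 * finrank K L = finrank K V

theorem IsLagrangian.orthogonal_eq [FiniteDimensional K V] {Q : QuadraticForm K V}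
    {L : Submodule K V} (hQ : Q.polarBilin.Nondegenerate) (hL : IsLagrangian Q L) :
    LinearMap.BilinForm.orthogonal Q.polarBilin L = L := by
  have hle : L ≤ LinearMap.BilinForm.orthogonal Q.polarBilin L := fun x hx n hn => by
    change Q (n + x) - Q n - Q x = 0
    rw [hL.1 _ (add_mem hn hx), hL.1 n hn, hL.1 x hx, sub_zero, sub_zero]
  refine (Submodule.eq_of_le_of_finrank_le hle ?_).symm
  rw [LinearMap.BilinForm.finrank_orthogonal hQ]
  have := hL.2
  omega

end QuadraticMap

section ZeroSumTriples

variable {K V : Type*} [Field K] [AddCommGroup V] [Module K V] (L₁ L₂ L₃ : Submodule K V)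

def zeroSumTriples : Submodule K (L₁ × L₂ × L₃) :=
  LinearMap.ker (L₁.subtype.coprod (L₂.subtype.coprod L₃.subtype))

variable {L₁ L₂ L₃} in
theorem mem_zeroSumTriples {t : L₁ × L₂ × L₃} :
    t ∈ zeroSumTriples L₁ L₂ L₃ ↔ (t.1 : V) + t.2.1 + t.2.2 = 0 := by
  simp [zeroSumTriples, add_assoc]

namespace zeroSumTriples

def fst : zeroSumTriples L₁ L₂ L₃ →ₗ[K] V :=
  L₁.subtype ∘ₗ LinearMap.fst K _ _ ∘ₗ (zeroSumTriples L₁ L₂ L₃).subtype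

def snd : zeroSumTriples L₁ L₂ L₃ →ₗ[K] V :=
  L₂.subtype ∘ₗ LinearMap.fst K _ _ ∘ₗ LinearMap.snd K _ _ ∘ₗ (zeroSumTriples L₁ L₂ L₃).subtype

theorem range_fst : LinearMap.range (fst L₁ L₂ L₃) = L₁ ⊓ (L₂ ⊔ L₃) := by
  ext x
  constructor
  · rintro ⟨⟨⟨x, y, z⟩, ht⟩, rfl⟩
    rw [mem_zeroSumTriples] at ht
    refine ⟨x.2, ?_⟩
    change (x : V) ∈ L₂ ⊔ L₃
    rw [show (x : V) = -y + -z by rw [← sub_eq_zero, ← ht]; abel]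
    exact add_mem (Submodule.mem_sup_left (neg_mem y.2)) (Submodule.mem_sup_right (neg_mem z.2))
  · rintro ⟨hx, hyz⟩
    obtain ⟨y, hy, z, hz, rfl⟩ := Submodule.mem_sup.mp hyz
    refine ⟨⟨(⟨y + z, hx⟩, ⟨-y, neg_mem hy⟩, ⟨-z, neg_mem hz⟩), ?_⟩, rfl⟩
    rw [mem_zeroSumTriples]
    change y + z + -y + -z = 0
    abel

end zeroSumTriples

def kashiwaraForm (B : LinearMap.BilinForm K V) :
    LinearMap.BilinForm K (zeroSumTriples L₁ L₂ L₃) :=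
  B.comp (zeroSumTriples.fst L₁ L₂ L₃) (zeroSumTriples.snd L₁ L₂ L₃)

theorem isAlt_kashiwaraForm_polarBilin {L₁ L₂ L₃ : Submodule K V} (Q : QuadraticForm K V)
    (h₁ : ∀ x ∈ L₁, Q x = 0) (h₂ : ∀ x ∈ L₂, Q x = 0) (h₃ : ∀ x ∈ L₃, Q x = 0) :
    (kashiwaraForm L₁ L₂ L₃ Q.polarBilin).IsAlt := by
  rintro ⟨⟨x, y, z⟩, ht⟩
  rw [mem_zeroSumTriples] at ht
  change Q (x + y) - Q x - Q y = 0
  rw [eq_neg_of_add_eq_zero_left ht, Q.map_neg, h₃ _ z.2, h₁ _ x.2, h₂ _ y.2, sub_zero, sub_zero]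

variable [FiniteDimensional K V] {B : LinearMap.BilinForm K V} (hB : B.Nondegenerate)
  (hB₀ : B.IsRefl) (h₁ : B.orthogonal L₁ = L₁) (h₂ : B.orthogonal L₂ = L₂)
  (h₃ : B.orthogonal L₃ = L₃)
include hB hB₀ h₁ h₂ h₃

open LinearMap.BilinForm in
theorem ker_kashiwaraForm :
    LinearMap.ker (kashiwaraForm L₁ L₂ L₃ B) =
      (L₁ ⊓ L₂ ⊔ L₁ ⊓ L₃).comap (zeroSumTriples.fst L₁ L₂ L₃) := by
  have isotropic {L : Submodule K V} (hL : B.orthogonal L = L) {x y : V} (hx : x ∈ L)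
      (hy : y ∈ L) : B x y = 0 := by rw [← hL] at hy; exact hy x hx
  ext ⟨⟨x, y, z⟩, ht⟩
  rw [LinearMap.mem_ker, Submodule.mem_comap]
  constructor
  · intro h
    have hx : (x : V) ∈ B.orthogonal (L₂ ⊓ (L₁ ⊔ L₃)) := by
      rintro n ⟨hn₂, hn⟩
      obtain ⟨a, ha, c, hc, rfl⟩ := Submodule.mem_sup.mp hn
      refine hB₀ _ _ (LinearMap.congr_fun h
        ⟨(⟨-a, neg_mem ha⟩, ⟨a + c, hn₂⟩, ⟨-c, neg_mem hc⟩), ?_⟩)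
      rw [mem_zeroSumTriples]
      change -a + (a + c) + -c = 0
      abel
    rw [orthogonal_inf hB hB₀, h₂, orthogonal_sup, h₁, h₃] at hx
    rw [inf_sup_assoc_of_le _ inf_le_left]
    exact ⟨x.2, hx⟩
  · intro hx
    ext ⟨⟨x', y', z'⟩, ht'⟩
    obtain ⟨u, hu, w, hw, hx⟩ := Submodule.mem_sup.mp hx
    rw [mem_zeroSumTriples] at ht'
    have hy' : (y' : V) = -x' - z' := by rw [← sub_eq_zero, ← ht']; abel
    change B x y' = 0
    change u + w = (x : V) at hx
    rw [← hx, map_add, LinearMap.add_apply, isotropic h₂ hu.2 y'.2, hy', map_sub, map_neg,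
      isotropic h₁ hw.1 x'.2, isotropic h₃ hw.2 z'.2]
    simp

theorem finrank_range_kashiwaraForm_add :
    finrank K (LinearMap.range (kashiwaraForm L₁ L₂ L₃ B)) + finrank K ↥(L₁ ⊓ L₂ ⊔ L₁ ⊓ L₃) =
      finrank K ↥(L₁ ⊓ (L₂ ⊔ L₃)) := by
  have hS : L₁ ⊓ L₂ ⊔ L₁ ⊓ L₃ ≤ LinearMap.range (zeroSumTriples.fst L₁ L₂ L₃) :=
    zeroSumTriples.range_fst L₁ L₂ L₃ ▸
      sup_le (inf_le_inf_left _ le_sup_left) (inf_le_inf_left _ le_sup_right)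
  have hform := LinearMap.finrank_range_add_finrank_ker (kashiwaraForm L₁ L₂ L₃ B)
  have hfst := LinearMap.finrank_range_add_finrank_ker (zeroSumTriples.fst L₁ L₂ L₃)
  rw [ker_kashiwaraForm L₁ L₂ L₃ hB hB₀ h₁ h₂ h₃, LinearMap.finrank_comap_of_le_range _ hS] at hform
  rw [zeroSumTriples.range_fst] at hfst
  omega

end ZeroSumTriples

open LinearMap.BilinForm in
theorem QuadraticMap.IsLagrangian.finrank_inf_add_finrank_inf_add_finrank_inf_modEq
    {K V : Type*} [Field K] [AddCommGroup V] [Module K V] [FiniteDimensional K V]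
    {Q : QuadraticForm K V} (hQ : Q.polarBilin.Nondegenerate) {L₁ L₂ L₃ : Submodule K V}
    (h₁ : IsLagrangian Q L₁) (h₂ : IsLagrangian Q L₂) (h₃ : IsLagrangian Q L₃) :
    finrank K ↥(L₁ ⊓ L₂) + finrank K ↥(L₂ ⊓ L₃) + finrank K ↥(L₃ ⊓ L₁) ≡ finrank K L₁ [MOD 2] := by
  have o₁ := h₁.orthogonal_eq hQ
  have o₂ := h₂.orthogonal_eq hQ
  have o₃ := h₃.orthogonal_eq hQ
  have heven := (isAlt_kashiwaraForm_polarBilin Q h₁.1 h₂.1 h₃.1).even_finrank_range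
  have hrank := finrank_range_kashiwaraForm_add L₁ L₂ L₃ hQ (polarBilin_isRefl Q) o₁ o₂ o₃
  have h₁₂₁₃ := Submodule.finrank_sup_add_finrank_inf_eq (L₁ ⊓ L₂) (L₁ ⊓ L₃)
  rw [inf_inf_inf_comm, inf_idem] at h₁₂₁₃
  have h₁₂₃ := Submodule.finrank_sup_add_finrank_inf_eq L₁ (L₂ ⊔ L₃)
  have h₂₃ := Submodule.finrank_sup_add_finrank_inf_eq L₂ L₃
  have hsum : finrank K ↥(L₁ ⊔ (L₂ ⊔ L₃)) + finrank K ↥(L₁ ⊓ (L₂ ⊓ L₃)) = finrank K V := by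
    have := finrank_orthogonal hQ (L₁ ⊔ (L₂ ⊔ L₃))
    rw [orthogonal_sup, orthogonal_sup, o₁, o₂, o₃] at this
    have := Submodule.finrank_le (L₁ ⊔ (L₂ ⊔ L₃))
    omega
  rw [inf_comm L₃, Nat.ModEq]
  rw [Nat.even_iff] at heven
  have := h₁.2
  have := h₂.2
  have := h₃.2
  omega

theorem stmt1_general {Q : Type*} [AddCommGroup Q] [Module (ZMod 2) Q]
    [FiniteDimensional (ZMod 2) Q]
    (q : Q → ZMod 2) (b : Q → Q → ZMod 2)
    (hb : ∀ x y, b x y = q (x + y) - q x - q y)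
    (hbl : ∀ x₁ x₂ y, b (x₁ + x₂) y = b x₁ y + b x₂ y)
    (hnd : ∀ x, (∀ y, b x y = 0) → x = 0)
    (U U' U'' : Submodule (ZMod 2) Q)
    (hU : (∀ x ∈ U, q x = 0) ∧ 2 * finrank (ZMod 2) U = finrank (ZMod 2) Q)
    (hU' : (∀ x ∈ U', q x = 0) ∧ 2 * finrank (ZMod 2) U' = finrank (ZMod 2) Q)
    (hU'' : (∀ x ∈ U'', q x = 0) ∧ 2 * finrank (ZMod 2) U'' = finrank (ZMod 2) Q) :
    finrank (ZMod 2) ↥(U ⊓ U') + finrank (ZMod 2) ↥(U' ⊓ U'') +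
      finrank (ZMod 2) ↥(U'' ⊓ U) ≡ finrank (ZMod 2) U [MOD 2] := by
  have hpolar (x y : Q) : QuadraticMap.polar q x y = b x y := (hb x y).symm
  let qf := QuadraticMap.ofZModTwo q fun x x' y => by simp only [hpolar, hbl]
  have hnondeg : qf.polarBilin.Nondegenerate :=
    (QuadraticMap.polarBilin_isRefl qf).nondegenerate_iff_separatingLeft.mpr
      fun x hx => hnd x fun y => (hpolar x y).symm.trans (hx y)
  exact QuadraticMap.IsLagrangian.finrank_inf_add_finrank_inf_add_finrank_inf_modEq hnondeg
    hU hU' hU''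

/-- For a finite-dimensional metabolic quadratic space `(Q, q)` over F₂
(whose associated bilinear form is non-degenerate and alternating, and which admits a
maximal isotropic subspace), and any three maximal isotropic subspaces `U, U', U''`,
one has `dim(U ∩ U') + dim(U' ∩ U'') + dim(U'' ∩ U) ≡ dim U (mod 2)`. -/
theorem stmt1 {Q : Type*} [AddCommGroup Q] [Module (ZMod 2) Q]
    [FiniteDimensional (ZMod 2) Q]
    (q : Q → ZMod 2) (b : Q → Q → ZMod 2)
    (hb : ∀ x y, b x y = q (x + y) - q x - q y)
    (hbl : ∀ x₁ x₂ y, b (x₁ + x₂) y = b x₁ y + b x₂ y)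
    (hbr : ∀ x y₁ y₂, b x (y₁ + y₂) = b x y₁ + b x y₂)
    (halt : ∀ x, b x x = 0)
    (hnd : ∀ x, (∀ y, b x y = 0) → x = 0)
    (hmetabolic : ∃ U₀ : Submodule (ZMod 2) Q,
      (∀ x ∈ U₀, q x = 0) ∧ 2 * finrank (ZMod 2) U₀ = finrank (ZMod 2) Q)
    (U U' U'' : Submodule (ZMod 2) Q)
    (hU : (∀ x ∈ U, q x = 0) ∧ 2 * finrank (ZMod 2) U = finrank (ZMod 2) Q)
    (hU' : (∀ x ∈ U', q x = 0) ∧ 2 * finrank (ZMod 2) U' = finrank (ZMod 2) Q)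
    (hU'' : (∀ x ∈ U'', q x = 0) ∧ 2 * finrank (ZMod 2) U'' = finrank (ZMod 2) Q) :
    finrank (ZMod 2) ↥(U ⊓ U') + finrank (ZMod 2) ↥(U' ⊓ U'') +
      finrank (ZMod 2) ↥(U'' ⊓ U) ≡ finrank (ZMod 2) U [MOD 2] :=
  stmt1_general q b hb hbl hnd U U' U'' hU hU' hU''
end

section
/- Let G be a finite abelian 2-group equipped with a non-degenerate alternating bilinear pairing G × G → Q/Z. If we write G as a direct sum of cyclic groups ⊕_i Z/2^{n_i}, then for each n the number of indices i with n_i = n is even. In particular, the 2-rank of G (the dimension of G[2] over F_2) is even. -/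
/-!
Pick `x` of maximal order `N = exp G`. Some value `p x y` then has order `N` in `ℚ/ℤ`,
and as the `N`-torsion of `ℚ/ℤ` is cyclic, generated by `p x y`, the group splits as
`(ℤ/N)² ⊕ K` with `K` the orthogonal of `x` and `y`, on which `p` is again alternating and
non-degenerate. By induction, the number of solutions of `c • g = 0` is a square for every `c`.
For `G ≅ ⊕ ℤ/2^{nᵢ}` and `c = 2^m` this number is `2^{∑ min(nᵢ, m)}`, so all these sums
are even, and the multiplicity of `m` among the `nᵢ` is their second difference in `m`.
-/

open AddSubgroup Finset

lemma AddCircle.mem_zmultiples_of_nsmul_eq_zero {𝕜 : Type*} [AddCommGroup 𝕜]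
    [IsAddTorsionFree 𝕜] {p : 𝕜} {a z : AddCircle p} {N : ℕ} (hN : N ≠ 0)
    (ha : addOrderOf a = N) (hz : N • z = 0) :
    z ∈ zmultiples a := by
  have hfin : (zmultiples a : Set (AddCircle p)).Finite :=
    IsOfFinAddOrder.finite_zmultiples (addOrderOf_pos_iff.mp (ha ▸ Nat.pos_of_ne_zero hN))
  have hsub : (zmultiples a : Set (AddCircle p)) ⊆ {x | N • x = 0} := by
    rintro _ ⟨k, rfl⟩
    simp [← ha]
  have hcard :
      {x : AddCircle p | N • x = 0}.encard ≤ (zmultiples a : Set (AddCircle p)).encard := by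
    rw [← hfin.cast_ncard_eq, ← Nat.card_coe_set_eq]
    simp only [SetLike.coe_sort_coe, Nat.card_zmultiples, ha]
    exact card_torsion_le_of_isSMulRegular p N hN (nsmul_right_injective hN)
  rw [← SetLike.mem_coe, hfin.eq_of_subset_of_encard_le hsub hcard]
  exact hz

section TorsionCount

variable {A B : Type*} [AddMonoid A] [AddMonoid B] (c : ℕ)

lemma AddEquiv.card_subtype_nsmul_eq_zero (e : A ≃+ B) :
    Nat.card {a : A // c • a = 0} = Nat.card {b : B // c • b = 0} :=
  Nat.card_congr <| e.toEquiv.subtypeEquiv fun a => by simp [← map_nsmul]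

lemma Prod.card_subtype_nsmul_eq_zero :
    Nat.card {x : A × B // c • x = 0} =
      Nat.card {a : A // c • a = 0} * Nat.card {b : B // c • b = 0} := by
  rw [← Nat.card_prod]
  exact Nat.card_congr <| (Equiv.subtypeEquivRight fun x => Prod.ext_iff).trans
    (Equiv.subtypeProdEquivProd (p := fun a : A => c • a = 0) (q := fun b : B => c • b = 0))

lemma Pi.card_subtype_nsmul_eq_zero {ι : Type*} [Fintype ι] (M : ι → Type*)
    [∀ i, AddMonoid (M i)] :
    Nat.card {f : ∀ i, M i // c • f = 0} = ∏ i, Nat.card {a : M i // c • a = 0} := by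
  rw [← Nat.card_pi]
  exact Nat.card_congr <| (Equiv.subtypeEquivRight fun f => funext_iff).trans
    (Equiv.subtypePiEquivPi (p := fun i (a : M i) => c • a = 0))

lemma IsAddCyclic.card_subtype_nsmul_eq_zero {C : Type*} [AddCommGroup C] [IsAddCyclic C]
    [Finite C] : Nat.card {a : C // c • a = 0} = (Nat.card C).gcd c := by
  rw [← IsAddCyclic.card_nsmulAddMonoidHom_ker]
  exact Nat.card_congr <| Equiv.subtypeEquivRight fun a => by simp

end TorsionCount

section AlternatingPairing

variable {G : Type*} [AddCommGroup G] (p : G →+ G →+ AddCircle (1 : ℚ))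

lemma apply_swap_eq_neg_of_alternating (halt : ∀ x, p x x = 0) (x y : G) : p y x = -p x y := by
  have h := halt (x + y)
  simp only [map_add, AddMonoidHom.add_apply, halt, zero_add, add_zero] at h
  exact eq_neg_of_add_eq_zero_left h

lemma exists_addOrderOf_apply_eq_exponent [Finite G] (hnd : ∀ x, (∀ y, p x y = 0) → x = 0) :
    ∃ x y : G, addOrderOf (p x y) = AddMonoid.exponent G := by
  obtain ⟨x, hx⟩ := AddMonoid.exists_addOrderOf_eq_exponent (G := G) .of_finite
  have : Finite (p x).range := Finite.of_surjective _ (p x).rangeRestrict_surjective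
  obtain ⟨a, ha⟩ := AddMonoid.exists_addOrderOf_eq_exponent (G := (p x).range) .of_finite
  obtain ⟨y, hy⟩ := a.2
  refine ⟨x, y, ?_⟩
  rw [hy, AddSubgroup.addOrderOf_coe, ha]
  refine dvd_antisymm ?_ ?_
  · refine AddMonoid.exponent_dvd_of_forall_nsmul_eq_zero fun ⟨_, y', hy'⟩ => Subtype.ext ?_
    simp [← hy', ← map_nsmul, AddMonoid.exponent_nsmul_eq_zero]
  · rw [← hx]
    refine addOrderOf_dvd_of_nsmul_eq_zero (hnd _ fun y' => ?_)
    rw [map_nsmul, AddMonoidHom.nsmul_apply]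
    exact congrArg Subtype.val
      (AddMonoid.exponent_nsmul_eq_zero (⟨p x y', y', rfl⟩ : (p x).range))

def pairOrthogonal (x y : G) : AddSubgroup G := (p.flip x).ker ⊓ (p.flip y).ker

variable {p}

lemma mem_pairOrthogonal {x y g : G} : g ∈ pairOrthogonal p x y ↔ p g x = 0 ∧ p g y = 0 := by
  simp [pairOrthogonal]

section HyperbolicPair

variable {x y : G} {N : ℕ}

variable (p) in
noncomputable def hyperbolicSplitting (hx : N • x = 0) (hy : N • y = 0) :
    (ZMod N × ZMod N) × pairOrthogonal p x y →+ G :=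
  ((ZMod.lift N ⟨zmultiplesHom G x, by simpa using hx⟩).coprod
    (ZMod.lift N ⟨zmultiplesHom G y, by simpa using hy⟩)).coprod (pairOrthogonal p x y).subtype

variable (hx : N • x = 0) (hy : N • y = 0)

lemma hyperbolicSplitting_apply (α β : ℤ) (k : pairOrthogonal p x y) :
    hyperbolicSplitting p hx hy ((α, β), k) = α • x + β • y + k := by
  simp [hyperbolicSplitting]

variable (halt : ∀ x, p x x = 0) (hN : N ≠ 0) (ha : addOrderOf (p x y) = N)
include halt hN ha hx hy

lemma exists_sub_zsmul_add_zsmul_mem_pairOrthogonal (g : G) :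
    ∃ α β : ℤ, g - (α • x + β • y) ∈ pairOrthogonal p x y := by
  obtain ⟨α, hα⟩ := mem_zmultiples_iff.mp <| AddCircle.mem_zmultiples_of_nsmul_eq_zero hN ha
    (z := p g y) (by rw [← map_nsmul, hy, map_zero])
  obtain ⟨β, hβ⟩ := mem_zmultiples_iff.mp <| AddCircle.mem_zmultiples_of_nsmul_eq_zero hN ha
    (z := p g x) (by rw [← map_nsmul, hx, map_zero])
  refine ⟨α, -β, mem_pairOrthogonal.mpr ⟨?_, ?_⟩⟩ <;>
    simp [halt, apply_swap_eq_neg_of_alternating p halt x y, hα, hβ]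

lemma hyperbolicSplitting_bijective : Function.Bijective (hyperbolicSplitting p hx hy) := by
  refine ⟨(injective_iff_map_eq_zero _).mpr ?_, fun g => ?_⟩
  · rintro ⟨⟨i, j⟩, k⟩ h0
    obtain ⟨α, rfl⟩ := ZMod.intCast_surjective i
    obtain ⟨β, rfl⟩ := ZMod.intCast_surjective j
    have hk := mem_pairOrthogonal.mp k.2
    have hpy := congrArg (p · y) h0
    have hpx := congrArg (p · x) h0
    simp only [hyperbolicSplitting_apply, map_add, map_zsmul, AddMonoidHom.add_apply,
      AddMonoidHom.smul_apply, halt, apply_swap_eq_neg_of_alternating p halt x y, hk.1, hk.2,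
      smul_zero, smul_neg, zero_add, add_zero, map_zero, AddMonoidHom.zero_apply,
      neg_eq_zero] at hpx hpy
    have hα : (α : ZMod N) = 0 := by
      rw [ZMod.intCast_zmod_eq_zero_iff_dvd, ← ha]
      exact addOrderOf_dvd_iff_zsmul_eq_zero.mpr hpy
    have hβ : (β : ZMod N) = 0 := by
      rw [ZMod.intCast_zmod_eq_zero_iff_dvd, ← ha]
      exact addOrderOf_dvd_iff_zsmul_eq_zero.mpr hpx
    simp only [hα, hβ] at h0 ⊢
    simpa [hyperbolicSplitting] using h0
  · obtain ⟨α, β, hk⟩ := exists_sub_zsmul_add_zsmul_mem_pairOrthogonal hx hy halt hN ha g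
    exact ⟨((α, β), ⟨_, hk⟩), by rw [hyperbolicSplitting_apply, add_sub_cancel]⟩

lemma eq_zero_of_forall_pairOrthogonal (hnd : ∀ x, (∀ y, p x y = 0) → x = 0)
    {u : pairOrthogonal p x y} (hu : ∀ w : pairOrthogonal p x y, p u w = 0) : u = 0 := by
  refine Subtype.ext (hnd _ fun g => ?_)
  obtain ⟨α, β, hk⟩ := exists_sub_zsmul_add_zsmul_mem_pairOrthogonal hx hy halt hN ha g
  have hux := mem_pairOrthogonal.mp u.2
  rw [← sub_add_cancel g (α • x + β • y)]
  simpa [hux.1, hux.2] using hu ⟨_, hk⟩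

end HyperbolicPair

variable (p) in
theorem isSquare_card_subtype_nsmul_eq_zero_of_alternating [Finite G]
    (halt : ∀ x, p x x = 0) (hnd : ∀ x, (∀ y, p x y = 0) → x = 0) (c : ℕ) :
    IsSquare (Nat.card {g : G // c • g = 0}) := by
  induction hG : Nat.card G using Nat.strong_induction_on generalizing G with
  | _ n ih =>
  rcases subsingleton_or_nontrivial G with hG1 | hG1
  · have : Unique {g : G // c • g = 0} :=
      ⟨⟨⟨0, smul_zero c⟩⟩, fun _ => Subsingleton.elim _ _⟩
    simp [Nat.card_unique]
  obtain ⟨x, y, ha⟩ := exists_addOrderOf_apply_eq_exponent p hnd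
  set N := AddMonoid.exponent G
  have hN : NeZero N := ⟨AddMonoid.exponent_ne_zero_of_finite⟩
  have hN1 : 1 < N := AddMonoid.one_lt_exponent
  have hx : N • x = 0 := AddMonoid.exponent_nsmul_eq_zero x
  have hy : N • y = 0 := AddMonoid.exponent_nsmul_eq_zero y
  set K := pairOrthogonal p x y
  let e : (ZMod N × ZMod N) × K ≃+ G :=
    AddEquiv.ofBijective _ (hyperbolicSplitting_bijective hx hy halt hN.out ha)
  have hcard : Nat.card G = N * N * Nat.card K := by
    rw [← Nat.card_congr e.toEquiv, Nat.card_prod, Nat.card_prod, Nat.card_zmod]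
  have hK : IsSquare (Nat.card {k : K // c • k = 0}) := by
    refine ih (Nat.card K) ?_ ((p.comp K.subtype).compl₂ K.subtype) (fun k => halt k)
      (fun u hu => eq_zero_of_forall_pairOrthogonal hx hy halt hN.out ha hnd hu) rfl
    rw [← hG, hcard]
    exact (Nat.lt_mul_iff_one_lt_left Nat.card_pos).mpr (one_lt_mul hN1.le hN1)
  rw [← e.card_subtype_nsmul_eq_zero, Prod.card_subtype_nsmul_eq_zero,
    Prod.card_subtype_nsmul_eq_zero, IsAddCyclic.card_subtype_nsmul_eq_zero, Nat.card_zmod]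
  exact IsSquare.mul ⟨_, rfl⟩ hK

end AlternatingPairing

lemma Nat.gcd_pow_pow (q k m : ℕ) : (q ^ k).gcd (q ^ m) = q ^ min k m := by
  rcases le_total k m with h | h
  · rw [min_eq_left h, Nat.gcd_eq_left (pow_dvd_pow q h)]
  · rw [min_eq_right h, Nat.gcd_eq_right (pow_dvd_pow q h)]

lemma Nat.Prime.even_of_isSquare_pow {q s : ℕ} (hq : q.Prime) (h : IsSquare (q ^ s)) :
    Even s := by
  obtain ⟨r, hr⟩ := h
  have hr0 : r ≠ 0 := by rintro rfl; simp [hq.ne_zero] at hr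
  have := congrArg (·.factorization q) hr
  simp only [Nat.factorization_pow, Nat.factorization_mul hr0 hr0] at this
  exact ⟨_, by simpa [hq.factorization_self] using this⟩

section Multiplicities

variable {ι : Type*} [Fintype ι] (n : ι → ℕ) (m : ℕ)

lemma sum_min_succ_eq_add_card :
    ∑ i, min (n i) (m + 1) = ∑ i, min (n i) m + #{i | m + 1 ≤ n i} := by
  rw [card_filter, ← sum_add_distrib]
  refine sum_congr rfl fun i _ => ?_
  split_ifs <;> omega

lemma card_le_eq_card_eq_add_card_succ_le :
    #{i | m ≤ n i} = #{i | n i = m} + #{i | m + 1 ≤ n i} := by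
  simp only [card_filter, ← sum_add_distrib]
  refine sum_congr rfl fun i _ => ?_
  split_ifs <;> omega

end Multiplicities

theorem stmt2_general {G : Type*} [AddCommGroup G] [Fintype G]
    (p : G →+ G →+ AddCircle (1 : ℚ))
    (halt : ∀ x : G, p x x = 0)
    (hnd : ∀ x : G, (∀ y : G, p x y = 0) → x = 0)
    {ι : Type*} [Fintype ι]
    (n : ι → ℕ) (hpos : ∀ i, 0 < n i)
    (e : G ≃+ ∀ i, ZMod (2 ^ n i)) :
    (∀ m : ℕ, Even ((Finset.univ.filter fun i => n i = m).card)) ∧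
      Even (Fintype.card ι) := by
  have hsum : ∀ m, Even (∑ i, min (n i) m) := fun m => by
    have h := isSquare_card_subtype_nsmul_eq_zero_of_alternating p halt hnd (2 ^ m)
    simp only [e.card_subtype_nsmul_eq_zero, Pi.card_subtype_nsmul_eq_zero,
      IsAddCyclic.card_subtype_nsmul_eq_zero, Nat.card_zmod, Nat.gcd_pow_pow,
      Finset.prod_pow_eq_pow_sum] at h
    exact Nat.prime_two.even_of_isSquare_pow h
  have hge : ∀ m, Even #{i | m + 1 ≤ n i} := fun m =>
    (Nat.even_add.mp (sum_min_succ_eq_add_card n m ▸ hsum (m + 1))).mp (hsum m)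
  refine ⟨fun m => ?_, ?_⟩
  · rcases m with _ | m
    · rw [Finset.filter_false_of_mem fun i _ => (hpos i).ne']
      exact Even.zero
    · have h := card_le_eq_card_eq_add_card_succ_le n (m + 1)
      exact (Nat.even_add.mp (h ▸ hge m)).mpr (hge (m + 1))
  · rw [Fintype.card, ← Finset.filter_true_of_mem (s := univ) fun i _ => hpos i]
    exact hge 0

/-- A finite abelian 2-group `G` with a non-degenerate alternating
bilinear pairing `G × G → ℚ/ℤ`: in any decomposition `G ≅ ⊕ᵢ ℤ/2^{nᵢ}` into
(nontrivial) cyclic groups, for each `m` the number of indices `i` with `nᵢ = m`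
is even; in particular the 2-rank of `G` is even. -/
theorem stmt2 {G : Type*} [AddCommGroup G] [Fintype G]
    (h2grp : ∃ n : ℕ, Fintype.card G = 2 ^ n)
    (p : G →+ G →+ AddCircle (1 : ℚ))
    (halt : ∀ x : G, p x x = 0)
    (hnd : ∀ x : G, (∀ y : G, p x y = 0) → x = 0)
    {ι : Type*} [Fintype ι] [DecidableEq ι]
    (n : ι → ℕ) (hpos : ∀ i, 0 < n i)
    (e : G ≃+ ∀ i, ZMod (2 ^ n i)) :
    (∀ m : ℕ, Even ((Finset.univ.filter fun i => n i = m).card)) ∧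
      Even (Fintype.card ι) :=
  stmt2_general p halt hnd n hpos e
end

section
/- Let A be an F_2-vector space of dimension 2g with a non-degenerate alternating pairing ⟨,⟩ : A × A → μ_2, let Q_0,...,Q_{2g} ∈ A be elements with Q_0 + Q_1 + ... + Q_{2g} = 0, let H be an F_2-vector space and let α, β ∈ Hom(A, H) be linear maps. Suppose β ≠ 0 and β ≠ α, and suppose that ∑_{j∈J} α(Q_j) ≠ 0 for every J with ∅ ⊊ J ⊊ {0,...,2g}. Then there exists j ∈ {0,...,2g} such that β(Q_j) ≠ 0 and β(Q_j) ≠ α(Q_j). -/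
/-- Let `Q₀, ..., Q_{2g} ∈ A` span `A` and sum to `0`, and let
`α, β : A → H` be F₂-linear maps with `β ≠ 0`, `β ≠ α`. If `α` is non-degenerate in
the sense that `∑_{j ∈ J} α (Q j) ≠ 0` for every `J` with `∅ ⊊ J ⊊ {0, ..., 2g}`,
then there is a `j` with `β (Q j) ≠ 0` and `β (Q j) ≠ α (Q j)`. -/
theorem stmt11 {A H : Type*} [AddCommGroup A] [Module (ZMod 2) A]
    [AddCommGroup H] [Module (ZMod 2) H]
    (g : ℕ) (Q : Fin (2 * g + 1) → A)
    (hsum : ∑ j, Q j = 0)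
    (hspan : Submodule.span (ZMod 2) (Set.range Q) = ⊤)
    (α β : A →ₗ[ZMod 2] H) (hβ0 : β ≠ 0) (hβα : β ≠ α)
    (hnd : ∀ J : Finset (Fin (2 * g + 1)), J ≠ ∅ → J ≠ Finset.univ →
      ∑ j ∈ J, α (Q j) ≠ 0) :
    ∃ j : Fin (2 * g + 1), β (Q j) ≠ 0 ∧ β (Q j) ≠ α (Q j) := by
  classical
  by_contra hcon
  push_neg at hcon
  set J : Finset (Fin (2 * g + 1)) := Finset.univ.filter (fun j => β (Q j) ≠ 0) with hJ
  have hmemJ : ∀ j, j ∈ J ↔ β (Q j) ≠ 0 := by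
    intro j; simp [hJ]
  -- J ≠ ∅
  have hJne : J ≠ ∅ := by
    intro h
    apply hβ0
    have hz : ∀ j, β (Q j) = 0 := by
      intro j
      by_contra hne
      have : j ∈ J := (hmemJ j).2 hne
      simp [h] at this
    apply LinearMap.ext
    intro x
    have hx : x ∈ Submodule.span (ZMod 2) (Set.range Q) := by rw [hspan]; trivial
    induction hx using Submodule.span_induction with
    | mem y hy => obtain ⟨j, rfl⟩ := hy; simpa using hz j
    | zero => simp
    | add y z _ _ hy hz => simp [map_add, hy, hz]
    | smul c y _ hy => simp [map_smul, hy]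
  -- sum over J of α(Qj) = 0
  have hsumJ : ∑ j ∈ J, α (Q j) = 0 := by
    have h1 : ∀ j ∈ J, α (Q j) = β (Q j) := by
      intro j hj
      exact ((hcon j ((hmemJ j).1 hj)).symm)
    rw [Finset.sum_congr rfl h1]
    have h2 : ∑ j ∈ J, β (Q j) = ∑ j, β (Q j) := by
      apply Finset.sum_subset (Finset.subset_univ J)
      intro j _ hj
      by_contra hne
      exact hj ((hmemJ j).2 hne)
    rw [h2, ← map_sum, hsum, map_zero]
  have hJuniv : J = Finset.univ := by
    by_contra h
    exact hnd J hJne h hsumJ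
  -- so β = α on all Q j, hence β = α
  apply hβα
  have hall : ∀ j, β (Q j) = α (Q j) := by
    intro j
    have : j ∈ J := by rw [hJuniv]; exact Finset.mem_univ j
    exact hcon j ((hmemJ j).1 this)
  apply LinearMap.ext
  intro x
  have hx : x ∈ Submodule.span (ZMod 2) (Set.range Q) := by rw [hspan]; trivial
  induction hx using Submodule.span_induction with
  | mem y hy => obtain ⟨j, rfl⟩ := hy; exact hall j
  | zero => simp
  | add y z _ _ hy hz => simp [map_add, hy, hz]
  | smul c y _ hy => simp [map_smul, hy]
end
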